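/- arXiv:1109.4668 — 2 statements merged into one kernel-verified Lean document; each statement's English description precedes it below -/
import Mathlib

section
/- The determinants of the leaf and augmented covariance matrices satisfy det Σ_*^{(h)} = (1 − (2ρ²)^h / R_h) · det Σ^{(h)}; equivalently, det Σ^{(h)} / det Σ_*^{(h)} = R_h / (R_h − (2ρ²)^h) (note R_h ≥ 1 > 0, and for h ≥ 1 one has R_h > (2ρ²)^h). -/
/-!
Every row of `Σ^{(h)}` sums to `R_h`: a leaf has `2^{l-1}` leaves at distance `2l`. Hence
subtracting `ρ^h / R_h` times the sum of the leaf rows from the root row of `Σ_*^{(h)}` clears it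
off the diagonal and leaves the Schur complement `1 - 2^h ρ^{2h} / R_h` there. For the ratio,
`Σ^{(h)}` is positive definite: `Σ^{(h+1)}` consists of two copies of `Σ^{(h)}` coupled by the
constant `ρ^{2(h+1)}`, which gives inductively
`xᵀ Σ^{(h+1)} x ≥ ρ^{2(h+1)} (∑ x)² + (1 - ρ²) ‖x‖²`.
-/

open Finset

/-- Length of the longest common prefix of two binary strings of length `h`
(equal to `h` when the strings coincide). -/
def lcpLen (h : ℕ) (s t : Fin h → Bool) : ℕ :=
  (Finset.univ.filter (fun i : Fin h => ∀ j : Fin h, j ≤ i → s j = t j)).card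

/-- Tree distance between two leaves of the `h`-level balanced binary tree. -/
def treeDist (h : ℕ) (s t : Fin h → Bool) : ℕ :=
  2 * (h - lcpLen h s t)

/-- Leaf covariance matrix `Σ^{(h)}` with correlation parameter `ρ`. -/
noncomputable def SigmaLeaf (h : ℕ) (ρ : ℝ) :
    Matrix (Fin h → Bool) (Fin h → Bool) ℝ :=
  fun s t => ρ ^ treeDist h s t

/-- `R_h = 1 + Σ_{l=1}^{h} ρ^{2l} 2^{l−1}`. -/
noncomputable def Rh (h : ℕ) (ρ : ℝ) : ℝ :=
  1 + ∑ l ∈ Finset.range h, ρ ^ (2 * (l + 1)) * 2 ^ l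

/-- Augmented covariance matrix `Σ_*^{(h)}`, indexed by `{root} ∪ {0,1}^h`
(`none` is the root). -/
noncomputable def SigmaStar (h : ℕ) (ρ : ℝ) :
    Matrix (Option (Fin h → Bool)) (Option (Fin h → Bool)) ℝ :=
  fun u v =>
    match u, v with
    | none, none => 1
    | none, some _ => ρ ^ h
    | some _, none => ρ ^ h
    | some s, some t => ρ ^ treeDist h s t

open Matrix

lemma lcpLen_cons (h : ℕ) (b c : Bool) (s t : Fin h → Bool) :
    lcpLen (h + 1) (Fin.cons b s) (Fin.cons c t) = if b = c then lcpLen h s t + 1 else 0 := by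
  unfold lcpLen
  rw [Fin.card_filter_univ_succ]
  by_cases hbc : b = c <;> simp [Fin.forall_fin_succ, hbc]

lemma lcpLen_comm (h : ℕ) (s t : Fin h → Bool) : lcpLen h s t = lcpLen h t s := by
  simp only [lcpLen, @eq_comm Bool (s _)]

lemma treeDist_cons (h : ℕ) (b c : Bool) (s t : Fin h → Bool) :
    treeDist (h + 1) (Fin.cons b s) (Fin.cons c t) =
      if b = c then treeDist h s t else 2 * (h + 1) := by
  rw [treeDist, lcpLen_cons]
  split_ifs <;> simp [treeDist]


lemma Fintype.sum_fun_fin_succ {α M : Type*} [Fintype α] [AddCommMonoid M] {h : ℕ}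
    (F : (Fin (h + 1) → α) → M) : ∑ x, F x = ∑ b, ∑ y, F (Fin.cons b y) := by
  rw [← (Fin.consEquiv fun _ => α).sum_comp F, Fintype.sum_prod_type]
  rfl

lemma sigmaLeaf_cons (h : ℕ) (ρ : ℝ) (b c : Bool) (s t : Fin h → Bool) :
    SigmaLeaf (h + 1) ρ (Fin.cons b s) (Fin.cons c t) =
      if b = c then SigmaLeaf h ρ s t else ρ ^ (2 * (h + 1)) := by
  simp only [SigmaLeaf, treeDist_cons, apply_ite (ρ ^ ·)]

lemma sigmaLeaf_zero (ρ : ℝ) : SigmaLeaf 0 ρ = 1 := by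
  ext s t
  obtain rfl := Subsingleton.elim s t
  simp [SigmaLeaf, treeDist]

lemma isSymm_sigmaLeaf (h : ℕ) (ρ : ℝ) : (SigmaLeaf h ρ).IsSymm := by
  ext s t
  simp [SigmaLeaf, treeDist, lcpLen_comm h s t]

lemma Rh_succ (h : ℕ) (ρ : ℝ) : Rh (h + 1) ρ = Rh h ρ + 2 ^ h * ρ ^ (2 * (h + 1)) := by
  rw [Rh, Rh, Finset.sum_range_succ]
  ring

lemma Rh_pos (h : ℕ) (ρ : ℝ) : 0 < Rh h ρ :=
  add_pos_of_pos_of_nonneg one_pos <| Finset.sum_nonneg fun _ _ =>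
    mul_nonneg (Even.pow_nonneg (even_two_mul _) ρ) (by positivity)

lemma sum_sigmaLeaf_row (h : ℕ) (ρ : ℝ) (s : Fin h → Bool) :
    ∑ t, SigmaLeaf h ρ s t = Rh h ρ := by
  induction h with
  | zero => simp [SigmaLeaf, treeDist, Rh]
  | succ h ih =>
    have hfar : ∑ _t : Fin h → Bool, ρ ^ (2 * (h + 1)) = 2 ^ h * ρ ^ (2 * (h + 1)) := by simp
    rw [← Fin.cons_self_tail s, Fintype.sum_fun_fin_succ, Fintype.sum_bool, Rh_succ]
    cases s 0 <;> simp only [sigmaLeaf_cons, Bool.true_eq_false, Bool.false_eq_true, ↓reduceIte, ih,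
      hfar, add_comm]

lemma dotProduct_sigmaLeaf_succ_mulVec (h : ℕ) (ρ : ℝ) (x : (Fin (h + 1) → Bool) → ℝ) :
    x ⬝ᵥ SigmaLeaf (h + 1) ρ *ᵥ x =
      (fun s => x (Fin.cons false s)) ⬝ᵥ SigmaLeaf h ρ *ᵥ (fun s => x (Fin.cons false s)) +
      (fun s => x (Fin.cons true s)) ⬝ᵥ SigmaLeaf h ρ *ᵥ (fun s => x (Fin.cons true s)) +
      2 * ρ ^ (2 * (h + 1)) * ((∑ s, x (Fin.cons false s)) * ∑ s, x (Fin.cons true s)) := by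
  simp only [dotProduct, mulVec, Fintype.sum_fun_fin_succ, Fintype.sum_bool, sigmaLeaf_cons,
    Bool.true_eq_false, Bool.false_eq_true, if_true, if_false, mul_add, Finset.sum_add_distrib,
    ← Finset.mul_sum, ← Finset.sum_mul]
  ring

lemma le_dotProduct_sigmaLeaf_succ_mulVec (ρ : ℝ) (hρ : ρ ^ 2 ≤ 1) (h : ℕ)
    (x : (Fin (h + 1) → Bool) → ℝ) :
    ρ ^ (2 * (h + 1)) * (∑ s, x s) ^ 2 + (1 - ρ ^ 2) * ∑ s, x s ^ 2 ≤
      x ⬝ᵥ SigmaLeaf (h + 1) ρ *ᵥ x := by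
  induction h with
  | zero =>
    rw [dotProduct_sigmaLeaf_succ_mulVec, sigmaLeaf_zero, Fintype.sum_fun_fin_succ x,
      Fintype.sum_fun_fin_succ (x · ^ 2)]
    apply le_of_eq
    simp only [Fintype.sum_bool, Fintype.sum_unique, dotProduct, one_mulVec]
    ring
  | succ h ih =>
    set y := fun s => x (Fin.cons false s)
    set z := fun s => x (Fin.cons true s)
    rw [dotProduct_sigmaLeaf_succ_mulVec, Fintype.sum_fun_fin_succ x,
      Fintype.sum_fun_fin_succ (x · ^ 2), Fintype.sum_bool, Fintype.sum_bool]
    have hpow : ρ ^ (2 * (h + 1 + 1)) = ρ ^ (2 * (h + 1)) * ρ ^ 2 := by ring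
    have hslack : 0 ≤ ρ ^ (2 * (h + 1)) * (1 - ρ ^ 2) * ((∑ s, y s) ^ 2 + (∑ s, z s) ^ 2) :=
      mul_nonneg (mul_nonneg (Even.pow_nonneg (even_two_mul _) ρ) (sub_nonneg.2 hρ)) (by positivity)
    rw [hpow]
    nlinarith [ih y, ih z]

lemma posDef_sigmaLeaf (h : ℕ) {ρ : ℝ} (hρ : |ρ| < 1) : (SigmaLeaf h ρ).PosDef := by
  cases h with
  | zero => simpa [sigmaLeaf_zero] using PosDef.one
  | succ h =>
    have hρ2 : ρ ^ 2 < 1 := (sq_lt_one_iff_abs_lt_one ρ).2 hρ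
    refine posDef_iff_dotProduct_mulVec.2
      ⟨isHermitian_iff_isSymm.2 (isSymm_sigmaLeaf _ ρ), fun x hx => ?_⟩
    obtain ⟨s, hs⟩ := Function.ne_iff.1 hx
    have hsq : 0 < ∑ s, x s ^ 2 :=
      Finset.sum_pos' (fun _ _ => sq_nonneg _) ⟨s, Finset.mem_univ s, pow_two_pos_of_ne_zero hs⟩
    calc (0 : ℝ) < ρ ^ (2 * (h + 1)) * (∑ s, x s) ^ 2 + (1 - ρ ^ 2) * ∑ s, x s ^ 2 := by
          have := Even.pow_nonneg (even_two_mul (h + 1)) ρ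
          have := mul_pos (sub_pos.2 hρ2) hsq
          positivity
      _ ≤ star x ⬝ᵥ SigmaLeaf (h + 1) ρ *ᵥ x :=
        le_dotProduct_sigmaLeaf_succ_mulVec ρ hρ2.le h x

theorem Matrix.det_fromBlocks_const_of_sum_col {n K : Type*} [Fintype n] [DecidableEq n] [Field K]
    (A : Matrix n n K) {r : K} (hr : r ≠ 0) (hA : ∀ j, ∑ i, A i j = r) (b c d : K) :
    (fromBlocks A (of fun _ _ => b) (of fun _ _ => c) (of fun _ _ : Unit => d)).det =
      A.det * (d - b * c * Fintype.card n / r) := by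
  -- `L` subtracts `c / r` times the sum of the rows of `A` from the last row.
  set L : Matrix (n ⊕ Unit) (n ⊕ Unit) K := fromBlocks 1 0 (of fun _ _ => -(c / r)) 1
  have hL : L.det = 1 := by simp [L]
  have hLM : L * fromBlocks A (of fun _ _ => b) (of fun _ _ => c) (of fun _ _ => d) =
      fromBlocks A (of fun _ _ => b) 0 (of fun _ _ => d - b * c * Fintype.card n / r) := by
    simp only [L, fromBlocks_multiply, Matrix.one_mul, Matrix.zero_mul, add_zero]
    congr 1 <;> ext i j
    · simp [Matrix.mul_apply, ← Finset.mul_sum, hA, hr]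
    · simp only [add_apply, mul_apply, of_apply, sum_const, card_univ, nsmul_eq_mul]
      field_simp
      ring
  rw [← one_mul (det _), ← hL, ← det_mul, hLM, det_fromBlocks_zero₂₁]
  exact congrArg _ (det_unique _)

lemma sigmaStar_eq_submatrix (h : ℕ) (ρ : ℝ) :
    SigmaStar h ρ =
      (fromBlocks (SigmaLeaf h ρ) (of fun _ _ => ρ ^ h) (of fun _ _ => ρ ^ h)
        (of fun _ _ : Unit => 1)).submatrix
        (Equiv.optionEquivSumPUnit _) (Equiv.optionEquivSumPUnit _) := by
  ext (_ | s) (_ | t) <;> rfl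

lemma det_sigmaStar (h : ℕ) (ρ : ℝ) :
    (SigmaStar h ρ).det = (1 - (2 * ρ ^ 2) ^ h / Rh h ρ) * (SigmaLeaf h ρ).det := by
  have hcol (t : Fin h → Bool) : ∑ s, SigmaLeaf h ρ s t = Rh h ρ := by
    simpa [(isSymm_sigmaLeaf h ρ).apply] using sum_sigmaLeaf_row h ρ t
  rw [sigmaStar_eq_submatrix, det_submatrix_equiv_self,
    det_fromBlocks_const_of_sum_col _ (Rh_pos h ρ).ne' hcol]
  simp only [Fintype.card_fun, Fintype.card_bool, Fintype.card_fin]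
  push_cast
  ring

theorem det_ratio_general (h : ℕ) (ρ : ℝ) (hρ : ρ ∈ Set.Ioo (0:ℝ) 1) :
    (SigmaStar h ρ).det = (1 - (2 * ρ ^ 2) ^ h / Rh h ρ) * (SigmaLeaf h ρ).det ∧
    (SigmaLeaf h ρ).det / (SigmaStar h ρ).det =
      Rh h ρ / (Rh h ρ - (2 * ρ ^ 2) ^ h) := by
  have hleaf : (SigmaLeaf h ρ).det ≠ 0 :=
    (posDef_sigmaLeaf h (abs_lt.2 ⟨by linarith [hρ.1], hρ.2⟩)).det_pos.ne'
  refine ⟨det_sigmaStar h ρ, ?_⟩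
  rw [det_sigmaStar, div_mul_cancel_right₀ hleaf, one_sub_div (Rh_pos h ρ).ne', inv_div]

/-- `det Σ_*^{(h)} = (1 − (2ρ²)^h / R_h) · det Σ^{(h)}`, equivalently
`det Σ^{(h)} / det Σ_*^{(h)} = R_h / (R_h − (2ρ²)^h)`. -/
theorem det_ratio (h : ℕ) (hh : 1 ≤ h) (ρ : ℝ) (hρ : ρ ∈ Set.Ioo (0:ℝ) 1) :
    (SigmaStar h ρ).det = (1 - (2 * ρ ^ 2) ^ h / Rh h ρ) * (SigmaLeaf h ρ).det ∧
    (SigmaLeaf h ρ).det / (SigmaStar h ρ).det =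
      Rh h ρ / (Rh h ρ - (2 * ρ ^ 2) ^ h) :=
  det_ratio_general h ρ hρ
end

section
/- Assume Σ^{(h)} is invertible and let Λ = (Σ^{(h)})^{-1}. Then Λ applied to the all-ones vector equals (1/R_h) times the all-ones vector, and consequently the quadratic form of Λ at the all-ones vector equals 2^h / R_h; in particular the conditional root variance satisfies 1 − ρ^{2h} · (1ᵀ Λ 1) = 1 − (2ρ²)^h / R_h. -/
open Finset

lemma lcpLen_le (h : ℕ) (s t : Fin h → Bool) : lcpLen h s t ≤ h := by
  classical
  calc lcpLen h s t ≤ (Finset.univ : Finset (Fin h)).card := Finset.card_le_card (Finset.filter_subset _ _)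
  _ = h := by simp

lemma lcpLen_succ_ne (h : ℕ) (s t : Fin (h+1) → Bool) (hst : s 0 ≠ t 0) :
    lcpLen (h+1) s t = 0 := by
  classical
  unfold lcpLen
  rw [Finset.card_eq_zero, Finset.filter_eq_empty_iff]
  intro i _ hi
  exact hst (hi 0 (Fin.zero_le i))

lemma lcpLen_succ_eq (h : ℕ) (s t : Fin (h+1) → Bool) (hst : s 0 = t 0) :
    lcpLen (h+1) s t = lcpLen h (s ∘ Fin.succ) (t ∘ Fin.succ) + 1 := by
  classical
  unfold lcpLen
  have hset : (Finset.univ.filter (fun i : Fin (h+1) => ∀ j : Fin (h+1), j ≤ i → s j = t j))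
      = insert 0 ((Finset.univ.filter (fun i : Fin h => ∀ j : Fin h, j ≤ i →
          (s ∘ Fin.succ) j = (t ∘ Fin.succ) j)).map ⟨Fin.succ, Fin.succ_injective h⟩) := by
    ext i
    simp only [Finset.mem_insert, Finset.mem_map, Finset.mem_filter, Finset.mem_univ,
      true_and, Function.Embedding.coeFn_mk, Function.comp_apply]
    constructor
    · intro hi
      rcases Fin.eq_zero_or_eq_succ i with rfl | ⟨k, rfl⟩
      · exact Or.inl rfl
      · exact Or.inr ⟨k, fun j hj => hi j.succ (Fin.succ_le_succ_iff.mpr hj), rfl⟩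
    · rintro (rfl | ⟨k, hk, rfl⟩)
      · intro j hj
        rw [Fin.le_zero_iff] at hj
        subst hj; exact hst
      · intro j hj
        rcases Fin.eq_zero_or_eq_succ j with rfl | ⟨j', rfl⟩
        · exact hst
        · exact hk j' (Fin.succ_le_succ_iff.mp hj)
  rw [hset, Finset.card_insert_of_notMem, Finset.card_map, add_comm]
  simp only [Finset.mem_map, Function.Embedding.coeFn_mk]
  rintro ⟨k, _, hk⟩
  exact (Fin.succ_ne_zero k) hk

lemma rowSum (h : ℕ) (ρ : ℝ) : ∀ s : Fin h → Bool,
    (∑ t : Fin h → Bool, ρ ^ treeDist h s t) = Rh h ρ := by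
  induction h with
  | zero =>
      intro s
      simp [treeDist, Rh, lcpLen]
  | succ h ih =>
      intro s
      have hequiv := Fintype.sum_equiv (Fin.consEquiv (fun _ : Fin (h+1) => Bool))
        (fun p => ρ ^ treeDist (h+1) s (Fin.consEquiv _ p))
        (fun t => ρ ^ treeDist (h+1) s t) (fun _ => rfl)
      rw [← hequiv, Fintype.sum_prod_type]
      -- sum over Bool: b = s 0 and b = !s 0
      have hbool : ∀ f : Bool → ℝ, (∑ b : Bool, f b) = f (s 0) + f (!(s 0)) := by
        intro f; cases hs0 : s 0 <;> simp [add_comm]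
      rw [hbool]
      have hEq : ∀ t' : Fin h → Bool,
          treeDist (h+1) s (Fin.consEquiv _ (s 0, t')) = treeDist h (s ∘ Fin.succ) t' := by
        intro t'
        have h0 : (Fin.cons (s 0) t' : Fin (h+1) → Bool) 0 = s 0 := rfl
        have htail : ((Fin.cons (s 0) t' : Fin (h+1) → Bool) ∘ Fin.succ) = t' := by
          funext j; simp
        unfold treeDist
        rw [show (Fin.consEquiv (fun _ : Fin (h+1) => Bool)) (s 0, t') = Fin.cons (s 0) t' from rfl,
          lcpLen_succ_eq h s _ h0.symm, htail]
        have := lcpLen_le h (s ∘ Fin.succ) t'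
        omega
      have hNe : ∀ t' : Fin h → Bool,
          treeDist (h+1) s (Fin.consEquiv _ (!(s 0), t')) = 2 * (h+1) := by
        intro t'
        have h0 : (Fin.cons (!(s 0)) t' : Fin (h+1) → Bool) 0 = !(s 0) := rfl
        unfold treeDist
        rw [show (Fin.consEquiv (fun _ : Fin (h+1) => Bool)) (!(s 0), t') = Fin.cons (!(s 0)) t' from rfl,
          lcpLen_succ_ne h s _ (by rw [h0]; cases s 0 <;> simp)]
        omega
      have hsum1 : (∑ t' : Fin h → Bool, ρ ^ treeDist (h+1) s (Fin.consEquiv _ (s 0, t')))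
          = Rh h ρ := by
        rw [← ih (s ∘ Fin.succ)]
        exact Finset.sum_congr rfl fun t' _ => by rw [hEq t']
      have hsum2 : (∑ t' : Fin h → Bool, ρ ^ treeDist (h+1) s (Fin.consEquiv _ (!(s 0), t')))
          = 2 ^ h * ρ ^ (2 * (h+1)) := by
        simp only [hNe]
        rw [Finset.sum_const, nsmul_eq_mul]
        norm_num
      rw [hsum1, hsum2, Rh, Rh, Finset.sum_range_succ]
      ring

/-- If `Σ^{(h)}` is invertible and `Λ = (Σ^{(h)})⁻¹`, then `Λ 𝟏 = R_h⁻¹ 𝟏`,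
the quadratic form `𝟏ᵀ Λ 𝟏` equals `2^h / R_h`, and the conditional root variance
satisfies `1 − ρ^{2h} (𝟏ᵀ Λ 𝟏) = 1 − (2ρ²)^h / R_h`. -/
theorem inverse_on_ones (h : ℕ) (ρ : ℝ) (hρ : ρ ∈ Set.Ioo (0:ℝ) 1)
    (hinv : IsUnit (SigmaLeaf h ρ).det) :
    (SigmaLeaf h ρ)⁻¹.mulVec (fun _ => 1) =
      (Rh h ρ)⁻¹ • (fun _ : Fin h → Bool => (1 : ℝ)) ∧
    (∑ s : Fin h → Bool, ∑ t : Fin h → Bool, (SigmaLeaf h ρ)⁻¹ s t) =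
      2 ^ h / Rh h ρ ∧
    1 - ρ ^ (2 * h) * (∑ s : Fin h → Bool, ∑ t : Fin h → Bool, (SigmaLeaf h ρ)⁻¹ s t) =
      1 - (2 * ρ ^ 2) ^ h / Rh h ρ := by
  obtain ⟨hρ0, hρ1⟩ := hρ
  have hRpos : 0 < Rh h ρ := by
    have : 0 ≤ ∑ l ∈ Finset.range h, ρ ^ (2 * (l + 1)) * 2 ^ l := by
      apply Finset.sum_nonneg
      intro l _
      positivity
    unfold Rh; linarith
  have hR : Rh h ρ ≠ 0 := ne_of_gt hRpos
  have hmv : (SigmaLeaf h ρ).mulVec (fun _ => 1) = Rh h ρ • (fun _ : Fin h → Bool => (1:ℝ)) := by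
    funext s
    simp only [Matrix.mulVec, dotProduct, Pi.smul_apply, smul_eq_mul, mul_one]
    simpa [SigmaLeaf] using rowSum h ρ s
  have key : (SigmaLeaf h ρ)⁻¹.mulVec (fun _ => 1) =
      (Rh h ρ)⁻¹ • (fun _ : Fin h → Bool => (1 : ℝ)) := by
    have h2 : Rh h ρ • (SigmaLeaf h ρ)⁻¹.mulVec (fun _ => 1) = (fun _ : Fin h → Bool => (1:ℝ)) := by
      rw [← Matrix.mulVec_smul, ← hmv, Matrix.mulVec_mulVec, Matrix.nonsing_inv_mul _ hinv,
        Matrix.one_mulVec]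
    have h3 := congrArg (fun v => (Rh h ρ)⁻¹ • v) h2
    simpa [smul_smul, inv_mul_cancel₀ hR] using h3
  have hsum : (∑ s : Fin h → Bool, ∑ t : Fin h → Bool, (SigmaLeaf h ρ)⁻¹ s t) =
      2 ^ h / Rh h ρ := by
    have : ∀ s : Fin h → Bool, (∑ t : Fin h → Bool, (SigmaLeaf h ρ)⁻¹ s t)
        = (Rh h ρ)⁻¹ := by
      intro s
      have := congrFun key s
      simpa [Matrix.mulVec, dotProduct] using this
    rw [Finset.sum_congr rfl (fun s _ => this s), Finset.sum_const, nsmul_eq_mul]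
    simp [Fintype.card_fun, div_eq_mul_inv]
  refine ⟨key, hsum, ?_⟩
  rw [hsum]
  congr 1
  rw [mul_pow, ← pow_mul, div_eq_mul_inv, div_eq_mul_inv]
  ring
end
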